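/- Let n, D be natural numbers and let f be a real-valued function of n vectors in D-dimensional Euclidean space which is O(D)-invariant, i.e. f(Q v₁, ..., Q vₙ) = f(v₁, ..., vₙ) for every linear isometry equivalence Q of ℝ^D and all vectors v₁,...,vₙ. Then there exists a function g from n×n real matrices to ℝ such that f(v₁,...,vₙ) = g(G) for all inputs, where G is the Gram matrix with entries G_{ij} = ⟪v_i, v_j⟫. -/

import Mathlib

/-!
If `v` and `w` have the same Gram matrix, then `∑ cᵢ vᵢ ↦ ∑ cᵢ wᵢ` is a well-defined linear
isometry from the span of the `vᵢ` into the space, and in finite dimension it extends to a global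
linear isometry sending each `vᵢ` to `wᵢ`. Hence an invariant function is constant on the fibres
of the Gram map, i.e. it factors through it.
-/

open scoped RealInnerProductSpace

open LinearMap

theorem LinearMap.exists_comp_rangeRestrict_eq {R M N P : Type*} [Ring R]
    [AddCommGroup M] [AddCommGroup N] [AddCommGroup P] [Module R M] [Module R N] [Module R P]
    (A : M →ₗ[R] N) (B : M →ₗ[R] P) (h : ker A ≤ ker B) :
    ∃ φ : range A →ₗ[R] P, φ ∘ₗ A.rangeRestrict = B :=
  ⟨(ker A).liftQ B h ∘ₗ A.quotKerEquivRange.symm.toLinearMap, by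
    ext x
    simp [rangeRestrict, codRestrict, quotKerEquivRange_symm_apply_image]⟩

theorem LinearMap.exists_linearIsometry_comp_rangeRestrict_eq {𝕜 M E F : Type*} [RCLike 𝕜]
    [AddCommGroup M] [Module 𝕜 M] [SeminormedAddCommGroup E] [NormedSpace 𝕜 E]
    [NormedAddCommGroup F] [NormedSpace 𝕜 F]
    (A : M →ₗ[𝕜] E) (B : M →ₗ[𝕜] F) (h : ∀ x, ‖A x‖ = ‖B x‖) :
    ∃ L : range A →ₗᵢ[𝕜] F, ∀ x, L (A.rangeRestrict x) = B x := by
  obtain ⟨φ, hφ⟩ := A.exists_comp_rangeRestrict_eq B fun x hx ↦ by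
    rw [mem_ker, ← norm_eq_zero, ← h, mem_ker.mp hx, norm_zero]
  refine ⟨⟨φ, ?_⟩, fun x ↦ congr($hφ x)⟩
  rintro ⟨-, x, rfl⟩
  change ‖φ (A.rangeRestrict x)‖ = ‖A x‖
  rw [← comp_apply, hφ, h]

section Gram

variable {𝕜 E ι : Type*} [RCLike 𝕜] [NormedAddCommGroup E] [InnerProductSpace 𝕜 E]
  [FiniteDimensional 𝕜 E] [Fintype ι]

theorem exists_linearIsometryEquiv_of_gram_eq {v w : ι → E}
    (h : Matrix.gram 𝕜 v = Matrix.gram 𝕜 w) :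
    ∃ Q : E ≃ₗᵢ[𝕜] E, ∀ i, Q (v i) = w i := by
  classical
  set A := Fintype.linearCombination 𝕜 v
  set B := Fintype.linearCombination 𝕜 w
  have hnorm : ∀ c, ‖A c‖ = ‖B c‖ := fun c ↦ by
    have hinner : inner 𝕜 (A c) (A c) = inner 𝕜 (B c) (B c) := by
      simp only [A, B, Fintype.linearCombination_apply, ← Matrix.star_dotProduct_gram_mulVec, h]
    rw [@norm_eq_sqrt_re_inner 𝕜, @norm_eq_sqrt_re_inner 𝕜, hinner]
  obtain ⟨L, hL⟩ := A.exists_linearIsometry_comp_rangeRestrict_eq B hnorm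
  refine ⟨L.extend.toLinearIsometryEquiv rfl, fun i ↦ ?_⟩
  have hv : (A.rangeRestrict (Pi.single i 1) : E) = v i := by
    simp [A]
  rw [LinearIsometry.toLinearIsometryEquiv_apply, ← hv, L.extend_apply, hL]
  simp [B]

theorem factorsThrough_gram_of_invariant {α : Type*} {f : (ι → E) → α}
    (hf : ∀ (Q : E ≃ₗᵢ[𝕜] E) (v : ι → E), f (fun i => Q (v i)) = f v) :
    f.FactorsThrough (Matrix.gram 𝕜) := fun v w h ↦ by
  obtain ⟨Q, hQ⟩ := exists_linearIsometryEquiv_of_gram_eq h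
  rw [← hf Q v, funext hQ]

end Gram

/-- First Fundamental Theorem for O(D): any O(D)-invariant real-valued function of
`n` vectors in `D`-dimensional Euclidean space factors through the Gram matrix. -/
theorem invariant_factors_through_gram (n D : ℕ)
    (f : (Fin n → EuclideanSpace ℝ (Fin D)) → ℝ)
    (hf : ∀ (Q : EuclideanSpace ℝ (Fin D) ≃ₗᵢ[ℝ] EuclideanSpace ℝ (Fin D))
      (v : Fin n → EuclideanSpace ℝ (Fin D)), f (fun i => Q (v i)) = f v) :
    ∃ g : Matrix (Fin n) (Fin n) ℝ → ℝ,
      ∀ v : Fin n → EuclideanSpace ℝ (Fin D),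
        f v = g (Matrix.of fun i j => ⟪v i, v j⟫) :=
  ⟨Function.extend (Matrix.gram ℝ) f 0,
    fun v ↦ ((factorsThrough_gram_of_invariant hf).extend_apply 0 v).symm⟩
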